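/- arXiv:2007.06681 — 3 statements merged into one kernel-verified Lean document; each statement's English description precedes it below -/
import Mathlib

section
/- Let G be a chordal graph. Then G is strictly chordal (i.e., gem-free and dart-free) if and only if any two distinct minimal vertex separators of G are disjoint. -/
open SimpleGraph Matrix

/-- `S` separates `u` and `v` in `G`: every walk from `u` to `v` meets `S`. -/
def Separates {V : Type*} (G : SimpleGraph V) (u v : V) (S : Set V) : Prop :=
  ∀ p : G.Walk u v, ∃ x ∈ p.support, x ∈ S

/-- `S` is a minimal `uv`-separator. -/
def IsMinimalUVSeparator {V : Type*} (G : SimpleGraph V) (u v : V) (S : Set V) : Prop :=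
  u ≠ v ∧ ¬ G.Adj u v ∧ u ∉ S ∧ v ∉ S ∧ Separates G u v S ∧
    ∀ S' ⊂ S, ¬ Separates G u v S'

/-- `S` is a minimal vertex separator: a minimal `uv`-separator for some non-adjacent pair. -/
def IsMinimalVertexSeparator {V : Type*} (G : SimpleGraph V) (S : Set V) : Prop :=
  ∃ u v, IsMinimalUVSeparator G u v S

/-- `G` is chordal: it has no induced cycle of length at least 4. -/
def Chordal {V : Type*} (G : SimpleGraph V) : Prop :=
  ∀ n, 4 ≤ n → ¬ ∃ f : Fin n ↪ V, ∀ a b, (SimpleGraph.cycleGraph n).Adj a b ↔ G.Adj (f a) (f b)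

/-- `G` is strictly chordal: chordal with pairwise disjoint minimal vertex separators. -/
def StrictlyChordal {V : Type*} (G : SimpleGraph V) : Prop :=
  Chordal G ∧ ∀ S S' : Set V, IsMinimalVertexSeparator G S →
    IsMinimalVertexSeparator G S' → S ≠ S' → Disjoint S S'
/-- `Q` is a maximal clique of `G`. -/
def IsMaxClique {V : Type*} (G : SimpleGraph V) (Q : Set V) : Prop :=
  G.IsClique Q ∧ ∀ Q', G.IsClique Q' → Q ⊆ Q' → Q = Q'

/-- `v` is a simplicial vertex of `G`. -/
def IsSimplicial {V : Type*} (G : SimpleGraph V) (v : V) : Prop :=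
  G.IsClique (G.neighborSet v)

/-- `Q` is a boundary clique of `G`. -/
def IsBoundaryClique {V : Type*} (G : SimpleGraph V) (Q : Set V) : Prop :=
  IsMaxClique G Q ∧ ∃ Q', IsMaxClique G Q' ∧ Q' ≠ Q ∧
    Q ∩ Q' = {v ∈ Q | ¬ IsSimplicial G v}
/-- The gem: a path on vertices 0-1-2-3 plus a vertex 4 adjacent to all four. -/
def gem : SimpleGraph (Fin 5) :=
  SimpleGraph.fromRel (fun a b =>
    (a, b) ∈ [((0 : Fin 5), (1 : Fin 5)), (1, 2), (2, 3), (4, 0), (4, 1), (4, 2), (4, 3)])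

/-- The dart: `K₄` minus the edge `{2,3}` on vertices 0-3, plus vertex 4 adjacent to the
degree-3 vertex 0. -/
def dart : SimpleGraph (Fin 5) :=
  SimpleGraph.fromRel (fun a b =>
    (a, b) ∈ [((0 : Fin 5), (1 : Fin 5)), (0, 2), (0, 3), (1, 2), (1, 3), (4, 0)])

/-- `G` has no induced subgraph isomorphic to `H`. -/
def FreeOf {V : Type*} (G : SimpleGraph V) (H : SimpleGraph (Fin 5)) : Prop :=
  ¬ ∃ f : Fin 5 ↪ V, ∀ a b, H.Adj a b ↔ G.Adj (f a) (f b)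

/-!
In a chordal graph a minimal `uv`-separator `S` is a clique, and any two of its vertices have a
common neighbour on the `u`-side of `S`: take a shortest path between them through that side and
close it up by a shortest path through the `v`-side, or by the edge joining them; a longer path
would give a chordless cycle of length at least four.

Suppose distinct minimal separators `S`, `S'` meet in `x`, so that some `y ∈ S'` lies outside `S`,
say not on the `u`-side of `S`. Then `xy` is an edge, `x` and `y` have common neighbours `a`, `b`
on the two sides of `S'` (so `a ≁ b`), and `x` has a neighbour `c ≁ y` on the `u`-side of `S`.
According to which of `a`, `b` are adjacent to `c`, the vertices `x, y, a, b, c` induce a `C₄`, a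
gem or a dart.

Conversely, if `p₀p₁p₂p₃` plus `w` is an induced gem, the minimal `p₀p₂`- and `p₀p₃`-separators
inside `N(p₂)` and `N(p₃)` both contain `w`, but only the first contains `p₁`; a dart gives the
same pattern.
-/

lemma cycleGraph_adj_iff_val {n : ℕ} (i j : Fin n) :
    (cycleGraph n).Adj i j ↔ (j : ℕ) = i + 1 ∨ (i : ℕ) = j + 1 ∨
      ((i : ℕ) = 0 ∧ (j : ℕ) = n - 1 ∧ 2 ≤ n) ∨ ((j : ℕ) = 0 ∧ (i : ℕ) = n - 1 ∧ 2 ≤ n) := by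
  have := i.isLt
  have := j.isLt
  rw [cycleGraph_adj']
  rcases lt_trichotomy i j with h | rfl | h
  · rw [Fin.coe_sub_iff_lt.2 h, Fin.coe_sub_iff_le.2 h.le]
    omega
  · rw [Fin.coe_sub_iff_le.2 le_rfl]
    omega
  · rw [Fin.coe_sub_iff_le.2 h.le, Fin.coe_sub_iff_lt.2 h]
    omega

section InducedCopies
variable {V : Type*} {G : SimpleGraph V}

lemma exists_embedding_of_adj_iff {n : ℕ} {H : SimpleGraph (Fin n)} (f : Fin n → V)
    (hf : ∀ i j, H.Adj i j ↔ G.Adj (f i) (f j)) (hinj : ∀ i j, ¬ H.Adj i j → f i = f j → i = j) :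
    ∃ e : Fin n ↪ V, ∀ i j, H.Adj i j ↔ G.Adj (e i) (e j) := by
  refine ⟨⟨f, fun i j hij => ?_⟩, hf⟩
  by_cases h : H.Adj i j
  · exact absurd ((hf i j).1 h) (hij ▸ G.irrefl)
  · exact hinj i j h hij

open Walk in
theorem Chordal.length_le_three_of_isChordless (hG : Chordal G) {u : V} {c : G.Walk u u}
    (hc : c.IsCycle) (hch : c.IsChordless) : c.length ≤ 3 := by
  by_contra! h4
  set n := c.length
  have hwrap : G.Adj (c.getVert (n - 1)) u := by
    have := c.adj_getVert_succ (i := n - 1) (by omega)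
    rwa [Nat.sub_add_cancel (by omega : 1 ≤ n), getVert_length] at this
  have hinj : ∀ m ≤ n, ∀ l : Fin n, c.getVert m = c.getVert l → m = l ∨ (m = n ∧ (l : ℕ) = 0) := by
    intro m hm l hml
    rcases hm.lt_or_eq with hm | rfl
    · exact .inl (hc.getVert_injOn' (by simp; omega) (by simp; omega) hml)
    · refine .inr ⟨rfl, hc.getVert_injOn' (by simp; omega) (by simp) ?_⟩
      rw [← hml, getVert_length, getVert_zero]
  apply hG n h4
  refine exists_embedding_of_adj_iff (fun i => c.getVert i) (fun i j => ?_)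
    (fun i j _ h => Fin.ext ((hinj i (by omega) j h).resolve_right (by omega)))
  rw [cycleGraph_adj_iff_val]
  constructor
  · rintro (h | h | ⟨hi, hj, -⟩ | ⟨hj, hi, -⟩)
    · rw [h]; exact c.adj_getVert_succ (by omega)
    · rw [h]; exact (c.adj_getVert_succ (by omega)).symm
    · simpa [hi, hj] using hwrap.symm
    · simpa [hi, hj] using hwrap
  · intro hadj
    obtain ⟨k, hk, hkij⟩ := c.mk_mem_edges_iff_exists.1
      (hch.mem_edges (c.getVert_mem_support i) (c.getVert_mem_support j) hadj)
    rw [Sym2.eq_iff] at hkij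
    rcases hkij with ⟨h1, h2⟩ | ⟨h1, h2⟩
    · have := hinj k (by omega) i h1
      have := hinj (k + 1) (by omega) j h2
      omega
    · have := hinj k (by omega) j h1
      have := hinj (k + 1) (by omega) i h2
      omega

instance : DecidableRel gem.Adj := fun a b => decidable_of_iff _ (fromRel_adj _ a b).symm

lemma FreeOf.false_of_gem (h : FreeOf G gem) {p₀ p₁ p₂ p₃ w : V}
    (h01 : G.Adj p₀ p₁) (h12 : G.Adj p₁ p₂) (h23 : G.Adj p₂ p₃) (hw0 : G.Adj w p₀)
    (hw1 : G.Adj w p₁) (hw2 : G.Adj w p₂) (hw3 : G.Adj w p₃) (h02 : ¬ G.Adj p₀ p₂)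
    (h03 : ¬ G.Adj p₀ p₃) (h13 : ¬ G.Adj p₁ p₃) (h02' : p₀ ≠ p₂) (h03' : p₀ ≠ p₃)
    (h13' : p₁ ≠ p₃) : False := by
  refine h (exists_embedding_of_adj_iff ![p₀, p₁, p₂, p₃, w] (fun i j => ?_) (fun i j hij => ?_))
  · fin_cases i <;> fin_cases j <;> simp +decide [*] <;>
      first | exact ‹G.Adj _ _›.symm | exact fun h => ‹¬ G.Adj _ _› h.symm
  · fin_cases i <;> fin_cases j <;> simp_all +decide [eq_comm]

instance : DecidableRel dart.Adj := fun a b => decidable_of_iff _ (fromRel_adj _ a b).symm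

lemma FreeOf.false_of_dart (h : FreeOf G dart) {x y a b c : V}
    (hxy : G.Adj x y) (hxa : G.Adj x a) (hxb : G.Adj x b) (hya : G.Adj y a) (hyb : G.Adj y b)
    (hcx : G.Adj c x) (hab : ¬ G.Adj a b) (hcy : ¬ G.Adj c y) (hca : ¬ G.Adj c a)
    (hcb : ¬ G.Adj c b) (hab' : a ≠ b) (hcy' : c ≠ y) (hca' : c ≠ a) (hcb' : c ≠ b) : False := by
  refine h (exists_embedding_of_adj_iff ![x, y, a, b, c] (fun i j => ?_) (fun i j hij => ?_))
  · fin_cases i <;> fin_cases j <;> simp +decide [*] <;>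
      first | exact ‹G.Adj _ _›.symm | exact fun h => ‹¬ G.Adj _ _› h.symm
  · fin_cases i <;> fin_cases j <;> simp_all +decide [eq_comm]

lemma Chordal.false_of_cycle4 (h : Chordal G) {a b c d : V}
    (hab : G.Adj a b) (hbc : G.Adj b c) (hcd : G.Adj c d) (hda : G.Adj d a)
    (hac : ¬ G.Adj a c) (hbd : ¬ G.Adj b d) (hac' : a ≠ c) (hbd' : b ≠ d) : False := by
  refine h 4 le_rfl (exists_embedding_of_adj_iff ![a, b, c, d] (fun i j => ?_) (fun i j hij => ?_))
  · fin_cases i <;> fin_cases j <;> simp +decide [*] <;>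
      first | exact ‹G.Adj _ _›.symm | exact fun h => ‹¬ G.Adj _ _› h.symm
  · fin_cases i <;> fin_cases j <;> simp_all +decide [eq_comm]

end InducedCopies

namespace SimpleGraph.Walk
variable {V : Type*} {G : SimpleGraph V} {u v : V}

lemma IsPath.exists_shortcut {p : G.Walk u v} (hp : p.IsPath) {i j : ℕ} (hij : i < j)
    (hj : j ≤ p.length) (hadj : G.Adj (p.getVert i) (p.getVert j)) :
    ∃ q : G.Walk u v, q.IsPath ∧ q.support ⊆ p.support ∧ q.length = i + 1 + (p.length - j) := by
  have hsub : ((p.take i).append (cons hadj (p.drop j))).support.Sublist p.support := by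
    rw [support_append, support_cons, List.tail_cons, support_take,
      drop_support_eq_support_drop_min, min_eq_left hj]
    conv_rhs => rw [← List.take_append_drop (i + 1) p.support]
    exact (List.Sublist.refl _).append (List.drop_sublist_drop_left _ (by omega))
  refine ⟨_, (isPath_def _).2 (hsub.nodup hp.support_nodup), hsub.subset, ?_⟩
  simp only [length_append, length_cons, take_length, drop_length]
  omega

lemma IsPath.exists_shorter_of_adj {p : G.Walk u v} (hp : p.IsPath) {a b : V}
    (ha : a ∈ p.support) (hb : b ∈ p.support) (hab : G.Adj a b) (hedge : s(a, b) ∉ p.edges)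
    (hends : s(a, b) ≠ s(u, v)) :
    ∃ q : G.Walk u v, q.IsPath ∧ q.support ⊆ p.support ∧ 2 ≤ q.length ∧ q.length < p.length := by
  obtain ⟨i, rfl, hi⟩ := mem_support_iff_exists_getVert.1 ha
  obtain ⟨j, rfl, hj⟩ := mem_support_iff_exists_getVert.1 hb
  clear ha hb
  wlog hij : i < j generalizing i j
  · have hne : i ≠ j := by rintro rfl; exact G.irrefl hab
    exact this j hj i hi hab.symm
      (by rwa [Sym2.eq_swap]) (by rwa [Sym2.eq_swap]) (by omega)
  have hsucc : j ≠ i + 1 := by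
    rintro rfl
    exact hedge (p.mk_mem_edges_iff_exists.2 ⟨i, by omega, rfl⟩)
  have hends' : ¬ (i = 0 ∧ j = p.length) := by
    rintro ⟨rfl, rfl⟩
    exact hends (by rw [getVert_zero, getVert_length])
  obtain ⟨q, hq, hqs, hql⟩ := hp.exists_shortcut hij hj hab
  exact ⟨q, hq, hqs, by omega, by omega⟩

def IsChordlessUpToEnds (p : G.Walk u v) : Prop :=
  ∀ ⦃a b⦄, a ∈ p.support → b ∈ p.support → G.Adj a b → s(a, b) ∈ p.edges ∨ s(a, b) = s(u, v)

lemma IsPath.exists_isChordlessUpToEnds {p : G.Walk u v} (hp : p.IsPath)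
    (h2 : 2 ≤ p.length) :
    ∃ q : G.Walk u v, q.IsPath ∧ 2 ≤ q.length ∧ q.support ⊆ p.support ∧ q.IsChordlessUpToEnds := by
  induction hn : p.length using Nat.strong_induction_on generalizing p with
  | _ n ih =>
    by_cases hc : p.IsChordlessUpToEnds
    · exact ⟨p, hp, h2, List.Subset.refl _, hc⟩
    simp only [IsChordlessUpToEnds, not_forall, not_or] at hc
    obtain ⟨a, b, ha, hb, hab, hedge, hends⟩ := hc
    obtain ⟨q, hq, hqp, hq2, hqlt⟩ := hp.exists_shorter_of_adj ha hb hab hedge hends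
    obtain ⟨r, hr, hr2, hrq, hrc⟩ := ih _ (hn ▸ hqlt) hq hq2 rfl
    exact ⟨r, hr, hr2, List.Subset.trans hrq hqp, hrc⟩

lemma IsChordless.isChordlessUpToEnds {p : G.Walk u v} (hp : p.IsChordless) :
    p.IsChordlessUpToEnds := fun _ _ ha hb hab => .inl (hp.mem_edges ha hb hab)

lemma IsPath.start_notMem_support_tail {p : G.Walk u v} (hp : p.IsPath) :
    u ∉ p.support.tail := by
  have := hp.support_nodup
  rw [← p.cons_tail_support, List.nodup_cons] at this
  exact this.1

lemma isChordless_append {p : G.Walk u v} {q : G.Walk v u}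
    (hp : p.IsChordlessUpToEnds) (hq : q.IsChordlessUpToEnds)
    (hends : G.Adj u v → s(u, v) ∈ p.edges ∨ s(u, v) ∈ q.edges)
    (hcross : ∀ a ∈ p.support, ∀ b ∈ q.support, G.Adj a b → a ∈ q.support ∨ b ∈ p.support) :
    (p.append q).IsChordless := by
  have hends' : ∀ {a b}, G.Adj a b → s(a, b) = s(u, v) → s(a, b) ∈ p.edges ∨ s(a, b) ∈ q.edges :=
    fun hab h => h ▸ hends (G.mem_edgeSet.1 (h ▸ G.mem_edgeSet.2 hab))
  have hpp : ∀ {a b}, a ∈ p.support → b ∈ p.support → G.Adj a b →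
      s(a, b) ∈ p.edges ∨ s(a, b) ∈ q.edges := fun ha hb hab =>
    (hp ha hb hab).elim .inl (hends' hab)
  have hqq : ∀ {a b}, a ∈ q.support → b ∈ q.support → G.Adj a b →
      s(a, b) ∈ p.edges ∨ s(a, b) ∈ q.edges := fun ha hb hab =>
    (hq ha hb hab).elim .inr fun h => hends' hab (h.trans (Sym2.eq_swap))
  rw [isChordless_iff_forall_mem_edges]
  intro a b ha hb hab
  rw [edges_append, List.mem_append]
  rw [mem_support_append_iff] at ha hb
  rcases ha with ha | ha <;> rcases hb with hb | hb
  · exact hpp ha hb hab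
  · exact (hcross a ha b hb hab).elim (fun ha' => hqq ha' hb hab) (fun hb' => hpp ha hb' hab)
  · rw [Sym2.eq_swap]
    exact (hcross b hb a ha hab.symm).elim (fun hb' => hqq hb' ha hab.symm)
      (fun ha' => hpp hb ha' hab.symm)
  · exact hqq ha hb hab

end SimpleGraph.Walk

section Separators
variable {V : Type*} {G : SimpleGraph V} {S : Set V} {u v z w : V}

def ReachableOutside (G : SimpleGraph V) (S : Set V) (a b : V) : Prop :=
  ∃ p : G.Walk a b, ∀ z ∈ p.support, z ∉ S

namespace ReachableOutside
variable {a b c : V}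

lemma refl (ha : a ∉ S) : ReachableOutside G S a a :=
  ⟨.nil, by simpa⟩

lemma symm (h : ReachableOutside G S a b) : ReachableOutside G S b a :=
  let ⟨p, hp⟩ := h
  ⟨p.reverse, by simpa⟩

lemma trans (h : ReachableOutside G S a b) (h' : ReachableOutside G S b c) :
    ReachableOutside G S a c :=
  let ⟨p, hp⟩ := h
  let ⟨q, hq⟩ := h'
  ⟨p.append q, by simp only [Walk.mem_support_append_iff]; grind⟩

lemma right_notMem (h : ReachableOutside G S a b) : b ∉ S :=
  let ⟨p, hp⟩ := h
  hp b p.end_mem_support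

lemma adj (h : ReachableOutside G S a b) (hbc : G.Adj b c) (hc : c ∉ S) :
    ReachableOutside G S a c :=
  h.trans ⟨hbc.toWalk, by simp [h.right_notMem, hc]⟩

lemma of_mem_support (h : ReachableOutside G S a b) {p : G.Walk b c} (hp : ∀ z ∈ p.support, z ∉ S)
    {z : V} (hz : z ∈ p.support) : ReachableOutside G S a z := by
  classical
  exact h.trans ⟨p.takeUntil z hz, fun y hy => hp y (p.support_takeUntil_subset_support hz hy)⟩

end ReachableOutside

lemma SimpleGraph.Walk.exists_adj_of_mem_support {T : Set V} {a b : V} (p : G.Walk a b)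
    (ha : a ∉ T) (hz : z ∈ p.support) (hzT : z ∈ T) :
    ∃ c t, t ∈ p.support ∧ t ∈ T ∧ ReachableOutside G T a c ∧ G.Adj c t := by
  induction p with
  | nil => exact absurd (List.mem_singleton.1 hz ▸ hzT) ha
  | @cons a b _ hab q ih =>
    by_cases hb : b ∈ T
    · exact ⟨a, b, by simp, hb, .refl ha, hab⟩
    have hzq : z ∈ q.support := by
      rcases List.mem_cons.1 (Walk.support_cons hab q ▸ hz) with rfl | h
      exacts [absurd hzT ha, h]
    obtain ⟨c, t, ht, htT, hc, hct⟩ := ih hb hzq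
    exact ⟨c, t, by simp [ht], htT, ((ReachableOutside.refl ha).adj hab hb).trans hc, hct⟩

lemma Separates.symm (h : Separates G u v S) : Separates G v u S := fun p =>
  let ⟨x, hx, hxS⟩ := h p.reverse
  ⟨x, by simpa using hx, hxS⟩

lemma Separates.not_reachableOutside (h : Separates G u v S)
    (hu : ReachableOutside G S u z) (hv : ReachableOutside G S v z) : False :=
  let ⟨p, hp⟩ := hu.trans hv.symm
  let ⟨x, hx, hxS⟩ := h p
  hp x hx hxS

lemma Separates.not_adj_of_reachableOutside (h : Separates G u v S)
    (hu : ReachableOutside G S u z) (hv : ReachableOutside G S v w) : ¬ G.Adj z w := fun hzw =>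
  h.not_reachableOutside (hu.adj hzw hv.right_notMem) hv

lemma Separates.mem_of_adj_of_adj (h : Separates G u v S) (hu : u ∉ S)
    (hv : v ∉ S) (huz : G.Adj u z) (hzv : G.Adj z v) : z ∈ S := by
  obtain ⟨w, hw, hwS⟩ := h (.cons huz (.cons hzv .nil))
  simp only [Walk.support_cons, Walk.support_nil, List.mem_cons, List.not_mem_nil,
    or_false] at hw
  rcases hw with rfl | rfl | rfl
  exacts [absurd hwS hu, hwS, absurd hwS hv]

namespace IsMinimalUVSeparator

lemma separates (h : IsMinimalUVSeparator G u v S) : Separates G u v S := h.2.2.2.2.1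

lemma left_notMem (h : IsMinimalUVSeparator G u v S) : u ∉ S := h.2.2.1

lemma right_notMem (h : IsMinimalUVSeparator G u v S) : v ∉ S := h.2.2.2.1

lemma symm (h : IsMinimalUVSeparator G u v S) : IsMinimalUVSeparator G v u S :=
  let ⟨hne, hadj, hu, hv, hsep, hmin⟩ := h
  ⟨hne.symm, fun h => hadj h.symm, hv, hu, hsep.symm, fun S' hS' hsep' => hmin S' hS' hsep'.symm⟩

lemma exists_adj_reachableOutside (h : IsMinimalUVSeparator G u v S) {x : V} (hx : x ∈ S) :
    ∃ c, ReachableOutside G S u c ∧ G.Adj c x := by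
  obtain ⟨p, hp⟩ : ∃ p : G.Walk u v, ∀ z ∈ p.support, z ∉ S \ {x} := by
    simpa [Separates] using h.2.2.2.2.2 _ (Set.sdiff_singleton_ssubset.2 hx)
  obtain ⟨z, hz, hzS⟩ := h.separates p
  obtain ⟨c, t, ht, htS, hc, hct⟩ := p.exists_adj_of_mem_support h.left_notMem hz hzS
  obtain rfl : t = x := by simpa [htS] using hp t ht
  exact ⟨c, hc, hct⟩

end IsMinimalUVSeparator

lemma exists_isMinimalUVSeparator_subset_neighborSet (hne : u ≠ v)
    (hadj : ¬ G.Adj u v) : ∃ S ⊆ G.neighborSet v, IsMinimalUVSeparator G u v S := by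
  have hu : u ∉ G.neighborSet v := fun h => hadj h.symm
  refine ⟨{z ∈ G.neighborSet v | ∃ c, ReachableOutside G (G.neighborSet v) u c ∧ G.Adj c z},
    fun z hz => hz.1, hne, hadj, fun h => hu h.1, fun h => G.irrefl h.1, fun p => ?_,
    fun S' hS' hsep => ?_⟩
  · have hnil : ¬ p.Nil := Walk.not_nil_of_ne hne
    obtain ⟨c, t, ht, htN, hc, hct⟩ := p.exists_adj_of_mem_support hu
      (p.getVert_mem_support _) (p.adj_penultimate hnil).symm
    exact ⟨t, ht, htN, c, hc, hct⟩
  · obtain ⟨z, ⟨hzN, c, hc, hcz⟩, hzS'⟩ := Set.exists_of_ssubset hS'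
    obtain ⟨p, hp⟩ := hc
    obtain ⟨w, hw, hwS'⟩ := hsep (p.append (.cons hcz (.cons hzN.symm .nil)))
    simp only [Walk.mem_support_append_iff, Walk.support_cons, Walk.support_nil,
      List.mem_cons, List.not_mem_nil, or_false] at hw
    rcases hw with hw | rfl | rfl | rfl
    · exact hp w hw (hS'.1 hwS').1
    · exact hp w p.end_mem_support (hS'.1 hwS').1
    · exact hzS' hwS'
    · exact G.irrefl (hS'.1 hwS').1

end Separators

section ChordalSeparators
variable {V : Type*} {G : SimpleGraph V} {S : Set V} {u v x y : V}
open Walk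

lemma IsMinimalUVSeparator.exists_path_through_side (h : IsMinimalUVSeparator G u v S)
    (hx : x ∈ S) (hy : y ∈ S) (hxy : x ≠ y) :
    ∃ P : G.Walk x y, P.IsPath ∧ 2 ≤ P.length ∧ P.IsChordlessUpToEnds ∧
      ∀ z ∈ P.support, z ≠ x → z ≠ y → ReachableOutside G S u z := by
  classical
  obtain ⟨c, hc, hcx⟩ := h.exists_adj_reachableOutside hx
  obtain ⟨d, hd, hdy⟩ := h.exists_adj_reachableOutside hy
  obtain ⟨r, hr⟩ := hc.symm.trans hd
  have hside : ∀ z ∈ r.bypass.support, ReachableOutside G S u z := fun z hz =>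
    hc.of_mem_support hr (r.support_bypass_subset_support hz)
  have hx' : x ∉ r.bypass.support := fun hz => (hside x hz).right_notMem hx
  have hy' : y ∉ r.bypass.support := fun hz => (hside y hz).right_notMem hy
  have hP₀ : (cons hcx.symm (r.bypass.concat hdy)).IsPath := by
    simp [cons_isPath_iff, concat_isPath_iff, support_concat, r.bypass_isPath, hx', hy', hxy]
  obtain ⟨P, hP, hP2, hPsub, hPc⟩ := hP₀.exists_isChordlessUpToEnds (by simp)
  refine ⟨P, hP, hP2, hPc, fun z hz hzx hzy => hside z ?_⟩
  simpa [support_concat, hzx, hzy] using hPsub hz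

theorem Chordal.isClique_of_isMinimalUVSeparator (hG : Chordal G)
    (h : IsMinimalUVSeparator G u v S) : G.IsClique S := by
  intro x hx y hy hxy
  by_contra hnadj
  obtain ⟨P, hP, hP2, hPc, hPside⟩ := h.exists_path_through_side hx hy hxy
  obtain ⟨Q, hQ, hQ2, hQc, hQside⟩ := h.symm.exists_path_through_side hy hx hxy.symm
  have hdisj : P.support.tail.Disjoint Q.support.tail := by
    intro z hzP hzQ
    have hzx : z ≠ x := by rintro rfl; exact hP.start_notMem_support_tail hzP
    have hzy : z ≠ y := by rintro rfl; exact hQ.start_notMem_support_tail hzQ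
    exact h.separates.not_reachableOutside (hPside z (List.mem_of_mem_tail hzP) hzx hzy)
      (hQside z (List.mem_of_mem_tail hzQ) hzy hzx)
  have hcross : ∀ a ∈ P.support, ∀ b ∈ Q.support, G.Adj a b → a ∈ Q.support ∨ b ∈ P.support := by
    intro a ha b hb hab
    by_contra! ⟨haQ, hbP⟩
    exact h.separates.not_adj_of_reachableOutside
      (hPside a ha (ne_of_mem_of_not_mem Q.end_mem_support haQ).symm
        (ne_of_mem_of_not_mem Q.start_mem_support haQ).symm)
      (hQside b hb (ne_of_mem_of_not_mem P.end_mem_support hbP).symm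
        (ne_of_mem_of_not_mem P.start_mem_support hbP).symm) hab
  have := hG.length_le_three_of_isChordless (hP.isCycle_append hQ hdisj (.inl hP2))
    (isChordless_append hPc hQc (fun h => absurd h hnadj) hcross)
  rw [length_append] at this
  omega

theorem Chordal.exists_adj_adj_of_isMinimalUVSeparator (hG : Chordal G)
    (h : IsMinimalUVSeparator G u v S) (hx : x ∈ S) (hy : y ∈ S) (hxy : x ≠ y) :
    ∃ a, ReachableOutside G S u a ∧ G.Adj a x ∧ G.Adj a y := by
  obtain ⟨P, hP, hP2, hPc, hPside⟩ := h.exists_path_through_side hx hy hxy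
  have hyx : G.Adj y x := hG.isClique_of_isMinimalUVSeparator h hy hx hxy.symm
  have hlen : P.length = 2 := by
    have hdisj : P.support.tail.Disjoint hyx.toWalk.support.tail := by
      simpa using hP.start_notMem_support_tail
    have hcross : ∀ a ∈ P.support, ∀ b ∈ hyx.toWalk.support, G.Adj a b →
        a ∈ hyx.toWalk.support ∨ b ∈ P.support := by
      simp +contextual
    have := hG.length_le_three_of_isChordless
      (hP.isCycle_append (by simp [hxy.symm]) hdisj (.inl hP2))
      (isChordless_append hPc hyx.isChordless_toWalk.isChordlessUpToEnds (by simp) hcross)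
    simp only [length_append] at this
    have : hyx.toWalk.length = 1 := rfl
    omega
  have hxa := P.adj_getVert_succ (i := 0) (by omega)
  have hay := P.adj_getVert_succ (i := 1) (by omega)
  rw [getVert_zero] at hxa
  rw [show 1 + 1 = P.length from hlen.symm, getVert_length] at hay
  exact ⟨P.getVert 1, hPside _ (P.getVert_mem_support 1) hxa.ne.symm hay.ne, hxa.symm, hay⟩

end ChordalSeparators

section Main
variable {V : Type*} {G : SimpleGraph V}

lemma exists_isMinimalVertexSeparator_ne_not_disjoint {a b b' w z : V} (hb : a ≠ b)
    (hb' : a ≠ b') (hab : ¬ G.Adj a b) (hab' : ¬ G.Adj a b') (hwa : G.Adj w a) (hwb : G.Adj w b)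
    (hwb' : G.Adj w b') (hza : G.Adj z a) (hzb : G.Adj z b) (hzb' : ¬ G.Adj z b') :
    ∃ S S', IsMinimalVertexSeparator G S ∧ IsMinimalVertexSeparator G S' ∧ S ≠ S' ∧
      ¬ Disjoint S S' := by
  obtain ⟨S, -, hS⟩ := exists_isMinimalUVSeparator_subset_neighborSet hb hab
  obtain ⟨S', hS'b', hS'⟩ := exists_isMinimalUVSeparator_subset_neighborSet hb' hab'
  have hzS := hS.separates.mem_of_adj_of_adj hS.left_notMem hS.right_notMem hza.symm hzb
  have hwS := hS.separates.mem_of_adj_of_adj hS.left_notMem hS.right_notMem hwa.symm hwb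
  have hwS' := hS'.separates.mem_of_adj_of_adj hS'.left_notMem hS'.right_notMem hwa.symm hwb'
  exact ⟨S, S', ⟨a, b, hS⟩, ⟨a, b', hS'⟩, fun h => hzb' (hS'b' (h ▸ hzS)).symm,
    Set.not_disjoint_iff.2 ⟨w, hwS, hwS'⟩⟩

lemma freeOf_gem_of_disjoint (h : ∀ S S' : Set V, IsMinimalVertexSeparator G S →
    IsMinimalVertexSeparator G S' → S ≠ S' → Disjoint S S') : FreeOf G gem := by
  rintro ⟨f, hf⟩
  have adj : ∀ i j, gem.Adj i j → G.Adj (f i) (f j) := fun i j => (hf i j).1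
  have nadj : ∀ i j, ¬ gem.Adj i j → ¬ G.Adj (f i) (f j) := fun i j => mt (hf i j).2
  obtain ⟨S, S', hS, hS', hne, hnd⟩ := exists_isMinimalVertexSeparator_ne_not_disjoint
    (f.injective.ne (by decide : (0 : Fin 5) ≠ 2)) (f.injective.ne (by decide : (0 : Fin 5) ≠ 3))
    (nadj 0 2 (by decide)) (nadj 0 3 (by decide)) (adj 4 0 (by decide)) (adj 4 2 (by decide))
    (adj 4 3 (by decide)) (adj 1 0 (by decide)) (adj 1 2 (by decide)) (nadj 1 3 (by decide))
  exact hnd (h S S' hS hS' hne)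

lemma freeOf_dart_of_disjoint (h : ∀ S S' : Set V, IsMinimalVertexSeparator G S →
    IsMinimalVertexSeparator G S' → S ≠ S' → Disjoint S S') : FreeOf G dart := by
  rintro ⟨f, hf⟩
  have adj : ∀ i j, dart.Adj i j → G.Adj (f i) (f j) := fun i j => (hf i j).1
  have nadj : ∀ i j, ¬ dart.Adj i j → ¬ G.Adj (f i) (f j) := fun i j => mt (hf i j).2
  obtain ⟨S, S', hS, hS', hne, hnd⟩ := exists_isMinimalVertexSeparator_ne_not_disjoint
    (f.injective.ne (by decide : (2 : Fin 5) ≠ 3)) (f.injective.ne (by decide : (2 : Fin 5) ≠ 4))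
    (nadj 2 3 (by decide)) (nadj 2 4 (by decide)) (adj 0 2 (by decide)) (adj 0 3 (by decide))
    (adj 0 4 (by decide)) (adj 1 2 (by decide)) (adj 1 3 (by decide)) (nadj 1 4 (by decide))
  exact hnd (h S S' hS hS' hne)

theorem Chordal.subset_of_common_mem (hG : Chordal G) (hgem : FreeOf G gem)
    (hdart : FreeOf G dart) {u v u' v' x : V} {S S' : Set V} (hS : IsMinimalUVSeparator G u v S)
    (hS' : IsMinimalUVSeparator G u' v' S') (hx : x ∈ S) (hx' : x ∈ S') : S' ⊆ S := by
  intro y hy'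
  by_contra hy
  wlog hyu : ¬ ReachableOutside G S u y generalizing u v
  · exact this hS.symm fun hyv => hS.separates.not_reachableOutside (not_not.1 hyu) hyv
  have hxy : x ≠ y := fun h => hy (h ▸ hx)
  have hxy_adj : G.Adj x y := hG.isClique_of_isMinimalUVSeparator hS' hx' hy' hxy
  obtain ⟨a, ha, hax, hay⟩ := hG.exists_adj_adj_of_isMinimalUVSeparator hS' hx' hy' hxy
  obtain ⟨b, hb, hbx, hby⟩ := hG.exists_adj_adj_of_isMinimalUVSeparator hS'.symm hx' hy' hxy
  have hab : ¬ G.Adj a b := hS'.separates.not_adj_of_reachableOutside ha hb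
  have hab' : a ≠ b := by rintro rfl; exact hS'.separates.not_reachableOutside ha hb
  obtain ⟨c, hc, hcx⟩ := hS.exists_adj_reachableOutside hx
  have hcy : ¬ G.Adj c y := fun h => hyu (hc.adj h hy)
  have hcy' : c ≠ y := by rintro rfl; exact hyu hc
  have hca' : c ≠ a := by rintro rfl; exact hcy hay
  have hcb' : c ≠ b := by rintro rfl; exact hcy hby
  by_cases hca : G.Adj c a <;> by_cases hcb : G.Adj c b
  · exact hG.false_of_cycle4 hca hay hby.symm hcb.symm hcy hab hcy' hab'
  · exact hgem.false_of_gem hca hay hby.symm hcx.symm hax.symm hxy_adj hbx.symm hcy hcb hab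
      hcy' hcb' hab'
  · exact hgem.false_of_gem hcb hby hay.symm hcx.symm hbx.symm hxy_adj hax.symm hcy hca
      (fun h => hab h.symm) hcy' hca' hab'.symm
  · exact hdart.false_of_dart hxy_adj hax.symm hbx.symm hay.symm hby.symm hcx hab hcy hca hcb hab'
      hcy' hca' hcb'

end Main

/-- A chordal graph is gem-free and dart-free iff any two distinct minimal vertex
separators are disjoint. -/
theorem stmt_9 {V : Type*} (G : SimpleGraph V) (hch : Chordal G) :
    (FreeOf G gem ∧ FreeOf G dart) ↔
      ∀ S S' : Set V, IsMinimalVertexSeparator G S → IsMinimalVertexSeparator G S' →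
        S ≠ S' → Disjoint S S' := by
  refine ⟨fun ⟨hgem, hdart⟩ S S' hS hS' hne => ?_,
    fun h => ⟨freeOf_gem_of_disjoint h, freeOf_dart_of_disjoint h⟩⟩
  obtain ⟨u, v, hS⟩ := hS
  obtain ⟨u', v', hS'⟩ := hS'
  refine Set.disjoint_left.2 fun x hx hx' => hne ?_
  exact (hch.subset_of_common_mem hgem hdart hS' hS hx' hx).antisymm
    (hch.subset_of_common_mem hgem hdart hS hS' hx hx')
end

section
/- Let G be a connected graph with a (k,ℓ)-cluster (F, S): F is a set of k ≥ 2 false twins each with open neighborhood exactly S, |S| = ℓ. Let H be any graph on vertex set F and let G(H) be the graph obtained from G by adding the edges of H. If μ is a Laplacian eigenvalue of H with an eigenvector x orthogonal to the all-ones vector on F, then ℓ + μ is a Laplacian eigenvalue of G(H), with eigenvector extending x by zeros. -/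
open SimpleGraph Matrix

/-- Cardoso–Rojo: given a `(k,ℓ)`-cluster `(F,S)` of a connected graph `G` and a graph `H`
on `F`, any Laplacian eigenvector `x` of `H` with eigenvalue `μ` orthogonal to the all-ones
vector, extended by zeros, is a Laplacian eigenvector of `G(H) = G ⊔ H` with eigenvalue
`ℓ + μ`. -/
theorem stmt_14 {V : Type*} [Fintype V] [DecidableEq V] (G H : SimpleGraph V)
    [DecidableRel G.Adj] [DecidableRel H.Adj] (F S : Set V) (k ℓ : ℕ)
    (hconn : G.Connected) (hk : 2 ≤ k) (hF : F.ncard = k) (hS : S.ncard = ℓ)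
    (hdisj : Disjoint F S)
    (htwin : ∀ v ∈ F, G.neighborSet v = S)
    (hHsupp : ∀ a b, H.Adj a b → a ∈ F ∧ b ∈ F)
    (μ : ℝ) (x : V → ℝ) (hxne : x ≠ 0)
    (hx0 : ∀ v ∉ F, x v = 0) (hxsum : ∑ v, x v = 0)
    (heig : H.lapMatrix ℝ *ᵥ x = μ • x) :
    (G ⊔ H).lapMatrix ℝ *ᵥ x = ((ℓ : ℝ) + μ) • x := by
  funext v
  have hNsup : (G ⊔ H).neighborFinset v = G.neighborFinset v ∪ H.neighborFinset v := by
    ext u; simp [sup_adj]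
  rw [lapMatrix_mulVec_apply, hNsup]
  have heigv : H.degree v * x v - ∑ u ∈ H.neighborFinset v, x u = μ * x v := by
    have := congrFun heig v
    rwa [lapMatrix_mulVec_apply, Pi.smul_apply, smul_eq_mul] at this
  by_cases hv : v ∈ F
  · -- v ∈ F
    have hNG : G.neighborSet v = S := htwin v hv
    have hdisjN : Disjoint (G.neighborFinset v) (H.neighborFinset v) := by
      rw [Finset.disjoint_left]
      intro u huG huH
      rw [mem_neighborFinset] at huG huH
      have huS : u ∈ S := by rw [← hNG]; exact huG
      exact hdisj.symm.ne_of_mem huS (hHsupp v u huH).2 rfl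
    have hdegG : G.degree v = ℓ := by
      rw [← hS, ← hNG, Set.ncard_eq_toFinset_card']; rfl
    have hcard : ((G ⊔ H).neighborFinset v).card
        = G.degree v + H.degree v := by
      rw [hNsup, Finset.card_union_of_disjoint hdisjN]; rfl
    have hdeg : (G ⊔ H).degree v = ℓ + H.degree v := by
      rw [SimpleGraph.degree, hcard, hdegG]
    have hsumG : ∑ u ∈ G.neighborFinset v, x u = 0 := by
      apply Finset.sum_eq_zero
      intro u hu
      rw [mem_neighborFinset] at hu
      have huS : u ∈ S := by rw [← hNG]; exact hu
      exact hx0 u (fun huF => hdisj.ne_of_mem huF huS rfl)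
    rw [Finset.sum_union hdisjN, hsumG, hdeg]
    push_cast
    rw [Pi.smul_apply, smul_eq_mul]
    linarith [heigv]
  · -- v ∉ F
    have hxv : x v = 0 := hx0 v hv
    have hNH : H.neighborFinset v = ∅ := by
      ext u; simp only [mem_neighborFinset, Finset.notMem_empty, iff_false]
      exact fun h => hv (hHsupp v u h).1
    have hsum : ∑ u ∈ G.neighborFinset v ∪ H.neighborFinset v, x u = 0 := by
      rw [hNH, Finset.union_empty]
      by_cases hvS : v ∈ S
      · have hsub : G.neighborFinset v ⊆ Finset.univ := Finset.subset_univ _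
        rw [← hxsum]
        apply Finset.sum_subset hsub
        intro u _ hu
        apply hx0
        intro huF
        apply hu
        rw [mem_neighborFinset]
        have : v ∈ G.neighborSet u := by rw [htwin u huF]; exact hvS
        exact this.symm
      · apply Finset.sum_eq_zero
        intro u hu
        rw [mem_neighborFinset] at hu
        apply hx0
        intro huF
        apply hvS
        have : v ∈ G.neighborSet u := hu.symm
        rwa [htwin u huF] at this
    rw [hsum, hxv, Pi.smul_apply, smul_eq_mul, hxv]
    ring
end

section
/- Let G be a graph and Q a maximal clique of G, with P the set of simplicial vertices of G contained in Q and |P| ≥ 2. Then any two vertices of P are true twins, and consequently |Q| is a Laplacian eigenvalue of G with multiplicity at least |P| - 1. -/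
/-!
A simplicial vertex `v` of a maximal clique `Q` has closed neighbourhood `N[v] = Q`: `N[v]` is a
clique containing `Q`. Hence the simplicial vertices of `Q` are pairwise true twins. For true twins
`x ≠ y` the vector `e_x - e_y` is a Laplacian eigenvector with eigenvalue `deg x + 1 = |N[x]|`,
here `|Q|`. Fixing `p₀ ∈ P`, the eigenvectors `e_p - e_{p₀}` for `p ∈ P \ {p₀}` are linearly
independent.
-/

open SimpleGraph Matrix

noncomputable def lapMult {V : Type*} [Fintype V] [DecidableEq V] (G : SimpleGraph V)
    [DecidableRel G.Adj] (μ : ℝ) : ℕ :=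
  Module.finrank ℝ (Module.End.eigenspace (Matrix.toLin' (G.lapMatrix ℝ)) μ)

theorem IsMaxClique.insert_neighborSet_eq {V : Type*} {G : SimpleGraph V} {Q : Set V}
    (hQ : IsMaxClique G Q) {v : V} (hvQ : v ∈ Q) (hv : IsSimplicial G v) :
    insert v (G.neighborSet v) = Q := by
  refine (hQ.2 _ (hv.insert fun _ hu _ => hu) fun u hu => ?_).symm
  rcases eq_or_ne u v with rfl | huv
  · exact Set.mem_insert _ _
  · exact Set.mem_insert_of_mem _ (hQ.1 hvQ hu huv.symm)

namespace SimpleGraph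

variable {V : Type*} (G : SimpleGraph V)

theorem ncard_insert_neighborSet [Fintype V] [DecidableRel G.Adj] (v : V) :
    (insert v (G.neighborSet v)).ncard = G.degree v + 1 := by
  rw [Set.ncard_insert_of_notMem G.notMem_neighborSet_self, ← G.card_neighborSet_eq_degree,
    Set.ncard_eq_toFinset_card', Set.toFinset_card]

variable {G} {x y : V} (htw : insert x (G.neighborSet x) = insert y (G.neighborSet y))
include htw

theorem adj_of_insert_neighborSet_eq (hxy : x ≠ y) : G.Adj x y := by
  have hy : y ∈ insert x (G.neighborSet x) := htw ▸ Set.mem_insert y _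
  exact hy.resolve_left hxy.symm

theorem adj_iff_adj_of_insert_neighborSet_eq {u : V} (hux : u ≠ x) (huy : u ≠ y) :
    G.Adj x u ↔ G.Adj y u := by
  have hu := Set.ext_iff.mp htw u
  simp only [Set.mem_insert_iff, hux, huy, false_or] at hu
  exact hu

theorem degree_eq_of_insert_neighborSet_eq [Fintype V] [DecidableRel G.Adj] :
    G.degree x = G.degree y := by
  have := congrArg Set.ncard htw
  rwa [ncard_insert_neighborSet, ncard_insert_neighborSet, Nat.add_right_cancel_iff] at this

theorem lapMatrix_mulVec_single_sub_single [Fintype V] [DecidableEq V] [DecidableRel G.Adj]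
    {R : Type*} [NonAssocRing R] (hxy : x ≠ y) :
    G.lapMatrix R *ᵥ (Pi.single x 1 - Pi.single y 1) =
      ((G.degree x + 1 : ℕ) : R) • (Pi.single x 1 - Pi.single y 1) := by
  ext u
  simp only [lapMatrix_mulVec_apply, Pi.sub_apply, Finset.sum_sub_distrib, Finset.sum_pi_single',
    mem_neighborFinset, Pi.smul_apply, smul_eq_mul]
  rcases eq_or_ne u x with rfl | hux
  · simp [hxy, adj_of_insert_neighborSet_eq htw hxy]
  rcases eq_or_ne u y with rfl | huy
  · simp [hux, (adj_of_insert_neighborSet_eq htw hxy).symm, degree_eq_of_insert_neighborSet_eq htw]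
    abel
  · simp [hux, huy, G.adj_comm u, adj_iff_adj_of_insert_neighborSet_eq htw hux huy]

end SimpleGraph

theorem linearIndependent_single_sub_single (R : Type*) {V : Type*} [Ring R] [DecidableEq V]
    {S : Set V} {y : V} (hy : y ∉ S) :
    LinearIndependent R fun x : S => (Pi.single (x : V) 1 - Pi.single y 1 : V → R) := by
  -- restricted to `S`, the family becomes the standard basis of `S → R`
  refine LinearIndependent.of_comp (LinearMap.funLeft R R ((↑) : S → V)) ?_
  convert Pi.linearIndependent_single_one S R using 1
  ext x z
  have hzy : (z : V) ≠ y := fun h => hy (h ▸ z.2)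
  simp [Pi.single_apply, hzy, Subtype.ext_iff]

theorem LinearIndependent.natCard_le_finrank_of_forall_mem {K M ι : Type*} [DivisionRing K]
    [AddCommGroup M] [Module K M] [FiniteDimensional K M] {p : Submodule K M} {b : ι → M}
    (hb : LinearIndependent K b) (hp : ∀ i, b i ∈ p) : Nat.card ι ≤ Module.finrank K p := by
  have hb' : LinearIndependent K fun i => (⟨b i, hp i⟩ : p) := hb.of_comp p.subtype
  have := hb'.finite
  have := Fintype.ofFinite ι
  rw [Nat.card_eq_fintype_card]
  exact hb'.fintype_card_le_finrank

theorem stmt_17_general {V : Type*} [Fintype V] [DecidableEq V] (G : SimpleGraph V)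
    [DecidableRel G.Adj] (Q P : Set V) (hQ : IsMaxClique G Q)
    (hP : P = {v ∈ Q | IsSimplicial G v}) :
    (∀ x ∈ P, ∀ y ∈ P, insert x (G.neighborSet x) = insert y (G.neighborSet y)) ∧
      P.ncard - 1 ≤ lapMult G (Q.ncard : ℝ) := by
  have hclosed : ∀ v ∈ P, insert v (G.neighborSet v) = Q := by
    intro v hv
    rw [hP] at hv
    exact hQ.insert_neighborSet_eq hv.1 hv.2
  refine ⟨fun x hx y hy => by rw [hclosed x hx, hclosed y hy], ?_⟩
  obtain rfl | ⟨p₀, hp₀⟩ := P.eq_empty_or_nonempty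
  · simp
  have heigen : ∀ p : ↥(P \ {p₀}), (Pi.single (p : V) 1 - Pi.single p₀ 1 : V → ℝ) ∈
      Module.End.eigenspace (toLin' (G.lapMatrix ℝ)) (Q.ncard : ℝ) := by
    rintro ⟨p, hp, hpp₀⟩
    have htw := (hclosed p hp).trans (hclosed p₀ hp₀).symm
    rw [Module.End.mem_eigenspace_iff, toLin'_apply, lapMatrix_mulVec_single_sub_single htw hpp₀,
      ← hclosed p hp, ncard_insert_neighborSet]
  calc P.ncard - 1 = Nat.card ↥(P \ {p₀}) := (Set.ncard_sdiff_singleton_of_mem hp₀).symm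
    _ ≤ lapMult G Q.ncard :=
      (linearIndependent_single_sub_single ℝ fun h => h.2 rfl).natCard_le_finrank_of_forall_mem
        heigen

/-- If `Q` is a maximal clique of `G` and `P` its set of simplicial vertices with
`|P| ≥ 2`, then any two vertices of `P` are true twins, and `|Q|` is a Laplacian
eigenvalue of `G` with multiplicity at least `|P| - 1`. -/
theorem stmt_17 {V : Type*} [Fintype V] [DecidableEq V] (G : SimpleGraph V)
    [DecidableRel G.Adj] (Q P : Set V) (hQ : IsMaxClique G Q)
    (hP : P = {v ∈ Q | IsSimplicial G v}) (h2 : 2 ≤ P.ncard) :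
    (∀ x ∈ P, ∀ y ∈ P, insert x (G.neighborSet x) = insert y (G.neighborSet y)) ∧
      P.ncard - 1 ≤ lapMult G (Q.ncard : ℝ) :=
  stmt_17_general G Q P hQ hP
end
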